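/- Let C be a triangulated category equipped with a weight structure w, and let m ≤ m' ≤ n' ≤ n be integers. If a morphism g : M → N in C kills weights m,…,n, then g also kills weights m',…,n'. -/

import Mathlib

open CategoryTheory CategoryTheory.Limits CategoryTheory.Pretriangulated ZeroObject

universe v u

variable (C : Type u) [Category.{v} C] [HasZeroObject C] [Preadditive C] [HasShift C ℤ]
  [∀ n : ℤ, (shiftFunctor C n).Additive] [Pretriangulated C]

/-- A weight structure on a triangulated category `C`: a pair of retract-closed classes
`le = C_{w≤0}` and `ge = C_{w≥0}` satisfying semi-invariance with respect to translations,
orthogonality, and the existence of weight decompositions. -/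
structure WeightStructure where
  /-- the class `C_{w≤0}` -/
  le : Set C
  /-- the class `C_{w≥0}` -/
  ge : Set C
  /-- `C_{w≤0}` is closed under retracts -/
  le_retract : ∀ ⦃X Y : C⦄ (i : X ⟶ Y) (r : Y ⟶ X), i ≫ r = 𝟙 X → le Y → le X
  /-- `C_{w≥0}` is closed under retracts -/
  ge_retract : ∀ ⦃X Y : C⦄ (i : X ⟶ Y) (r : Y ⟶ X), i ≫ r = 𝟙 X → ge Y → ge X
  /-- `C_{w≤0} ⊆ C_{w≤0}[1]`, i.e. `X ∈ C_{w≤0} → X[-1] ∈ C_{w≤0}` -/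
  le_shift : ∀ ⦃X : C⦄, le X → le ((shiftFunctor C (-1 : ℤ)).obj X)
  /-- `C_{w≥0}[1] ⊆ C_{w≥0}`, i.e. `X ∈ C_{w≥0} → X[1] ∈ C_{w≥0}` -/
  ge_shift : ∀ ⦃X : C⦄, ge X → ge ((shiftFunctor C (1 : ℤ)).obj X)
  /-- orthogonality: `Hom(X, Y[1]) = 0` for `X ∈ C_{w≤0}`, `Y ∈ C_{w≥0}` -/
  orth : ∀ ⦃X Y : C⦄, le X → ge Y → ∀ f : X ⟶ (shiftFunctor C (1 : ℤ)).obj Y, f = 0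
  /-- existence of weight decompositions -/
  decomp : ∀ M : C, ∃ (X Y : C) (f : X ⟶ M) (g : M ⟶ Y)
      (h : Y ⟶ (shiftFunctor C (1 : ℤ)).obj X),
      Triangle.mk f g h ∈ (distTriang C) ∧ le X ∧ ge ((shiftFunctor C (-1 : ℤ)).obj Y)

variable {C}

namespace WeightStructure

/-- `X ∈ C_{w≤i} = C_{w≤0}[i]`, i.e. `X[-i] ∈ C_{w≤0}`. -/
def leDeg (w : WeightStructure C) (i : ℤ) (X : C) : Prop :=
  w.le ((shiftFunctor C (-i)).obj X)

/-- `X ∈ C_{w≥i} = C_{w≥0}[i]`, i.e. `X[-i] ∈ C_{w≥0}`. -/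
def geDeg (w : WeightStructure C) (i : ℤ) (X : C) : Prop :=
  w.ge ((shiftFunctor C (-i)).obj X)

/-- The triangle `A → M → B → A[1]` is an `m`-weight decomposition of `M`:
it is distinguished, `A ∈ C_{w≤m}` and `B ∈ C_{w≥m+1}`. -/
def IsWeightDecomp (w : WeightStructure C) (m : ℤ) {A M B : C}
    (f : A ⟶ M) (g : M ⟶ B) (h : B ⟶ (shiftFunctor C (1 : ℤ)).obj A) : Prop :=
  Triangle.mk f g h ∈ (distTriang C) ∧ w.leDeg m A ∧ w.geDeg (m + 1) B

/-- `g : M ⟶ N` kills weights `m,…,n`: there exist an `n`-weight decomposition of `M` and an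
`(m-1)`-weight decomposition of `N` such that the composite `w_{≤n}M → M → N → w_{≥m}N` is `0`. -/
def KillsWeights (w : WeightStructure C) (m n : ℤ) {M N : C} (g : M ⟶ N) : Prop :=
  ∃ (A B A' B' : C) (f : A ⟶ M) (p : M ⟶ B) (δ : B ⟶ (shiftFunctor C (1 : ℤ)).obj A)
    (f' : A' ⟶ N) (p' : N ⟶ B') (δ' : B' ⟶ (shiftFunctor C (1 : ℤ)).obj A'),
    w.IsWeightDecomp n f p δ ∧ w.IsWeightDecomp (m - 1) f' p' δ' ∧ f ≫ g ≫ p' = 0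

/-- `M` is without weights `m,…,n` if `𝟙 M` kills weights `m,…,n`. -/
def WithoutWeights (w : WeightStructure C) (m n : ℤ) (M : C) : Prop :=
  w.KillsWeights m n (𝟙 M)

end WeightStructure

/-! If `g` kills weights `m,…,n`, take arbitrary decompositions `w_{≤n'}M → M` and `N → w_{≥m'}N`.
By orthogonality `w_{≤n'}M → M` factors through `w_{≤n}M`, and `N → w_{≥m'}N` factors through
`w_{≥m}N`; so the composite `w_{≤n'}M → M → N → w_{≥m'}N` factors through the zero composite
`w_{≤n}M → M → N → w_{≥m}N`. -/

lemma distinguished_mk_of_iso_obj₂ {X Y Z M : C} {f : X ⟶ Y} {g : Y ⟶ Z}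
    {h : Z ⟶ (shiftFunctor C (1 : ℤ)).obj X} (hT : Triangle.mk f g h ∈ distTriang C) (e : Y ≅ M) :
    Triangle.mk (f ≫ e.hom) (e.inv ≫ g) h ∈ distTriang C := by
  refine isomorphic_distinguished _ hT _
    (Triangle.isoMk _ _ (Iso.refl X) e.symm (Iso.refl Z) ?_ ?_ ?_)
  -- `simp` does not rewrite the objects `(Triangle.mk _ _ _).objᵢ` occurring in the goal's type.
  · change (f ≫ e.hom) ≫ e.inv = 𝟙 X ≫ f
    simp
  · change (e.inv ≫ g) ≫ 𝟙 Z = e.inv ≫ g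
    simp
  · change h ≫ (shiftFunctor C (1 : ℤ)).map (𝟙 X) = 𝟙 Z ≫ h
    simp

namespace WeightStructure

variable (w : WeightStructure C)

lemma le_of_iso {X Y : C} (e : X ≅ Y) (h : w.le Y) : w.le X :=
  w.le_retract e.hom e.inv e.hom_inv_id h

lemma ge_of_iso {X Y : C} (e : X ≅ Y) (h : w.ge Y) : w.ge X :=
  w.ge_retract e.hom e.inv e.hom_inv_id h

lemma leDeg_mono {a b : ℤ} (hab : a ≤ b) {X : C} (h : w.leDeg a X) : w.leDeg b X := by
  induction b, hab using Int.leInduction with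
  | base => exact h
  | succ b _ ih =>
    exact w.le_of_iso ((shiftFunctorAdd' C (-b) (-1) (-(b + 1)) (by ring)).app X) (w.le_shift ih)

lemma geDeg_anti {a b : ℤ} (hab : a ≤ b) {X : C} (h : w.geDeg b X) : w.geDeg a X := by
  induction a, hab using Int.leInductionDown with
  | base => exact h
  | pred a _ ih =>
    exact w.ge_of_iso ((shiftFunctorAdd' C (-a) 1 (-(a - 1)) (by ring)).app X) (w.ge_shift ih)

lemma hom_eq_zero_of_leDeg_of_geDeg {a b : ℤ} (hab : a < b) {X Y : C}
    (hX : w.leDeg a X) (hY : w.geDeg b Y) (φ : X ⟶ Y) : φ = 0 := by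
  have hY' : w.ge ((shiftFunctor C (-a - 1)).obj Y) := by
    simpa only [geDeg, neg_add'] using w.geDeg_anti (show a + 1 ≤ b by omega) hY
  let e : (shiftFunctor C (-a)).obj Y ≅
      (shiftFunctor C (1 : ℤ)).obj ((shiftFunctor C (-a - 1)).obj Y) :=
    (shiftFunctorAdd' C (-a - 1) 1 (-a) (by ring)).app Y
  apply (shiftFunctor C (-a)).map_injective
  rw [Functor.map_zero, ← cancel_mono e.hom, zero_comp]
  exact w.orth hX hY' _

lemma exists_isWeightDecomp (i : ℤ) (M : C) :
    ∃ (A B : C) (f : A ⟶ M) (p : M ⟶ B) (δ : B ⟶ (shiftFunctor C (1 : ℤ)).obj A),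
      w.IsWeightDecomp i f p δ := by
  obtain ⟨X, Y, f, g, h, mem, hX, hY⟩ := w.decomp ((shiftFunctor C (-i)).obj M)
  refine ⟨_, _, _, _, _, distinguished_mk_of_iso_obj₂ (Triangle.shift_distinguished _ mem i)
    ((shiftFunctorCompIsoId C (-i) i (by ring)).app M), ?_, ?_⟩
  · exact w.le_of_iso ((shiftFunctorCompIsoId C i (-i) (by ring)).app X) hX
  · exact w.ge_of_iso ((shiftFunctorAdd' C i (-(i + 1)) (-1) (by ring)).symm.app Y) hY

section IsWeightDecomp

variable {w} {n : ℤ} {A M B : C} {f : A ⟶ M} {p : M ⟶ B} {δ : B ⟶ (shiftFunctor C (1 : ℤ)).obj A}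

lemma IsWeightDecomp.exists_lift (hd : w.IsWeightDecomp n f p δ) {X : C} (hX : w.leDeg n X)
    (x : X ⟶ M) : ∃ α : X ⟶ A, x = α ≫ f :=
  Triangle.coyoneda_exact₂ _ hd.1 x
    (w.hom_eq_zero_of_leDeg_of_geDeg (lt_add_one n) hX hd.2.2 _)

lemma IsWeightDecomp.exists_desc (hd : w.IsWeightDecomp n f p δ) {Y : C}
    (hY : w.geDeg (n + 1) Y) (y : M ⟶ Y) : ∃ β : B ⟶ Y, y = p ≫ β :=
  Triangle.yoneda_exact₂ _ hd.1 y
    (w.hom_eq_zero_of_leDeg_of_geDeg (lt_add_one n) hd.2.1 hY _)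

end IsWeightDecomp

end WeightStructure

theorem killsWeights_mono_general (w : WeightStructure C) (m n m' n' : ℤ)
    (h1 : m ≤ m') (h3 : n' ≤ n)
    {M N : C} (g : M ⟶ N) (hg : w.KillsWeights m n g) :
    w.KillsWeights m' n' g := by
  obtain ⟨A, B, A', B', f, p, δ, f', p', δ', hd, hd', hz⟩ := hg
  obtain ⟨X, Y, x, y, d, hdX⟩ := w.exists_isWeightDecomp n' M
  obtain ⟨U, V, u, v, e, hdU⟩ := w.exists_isWeightDecomp (m' - 1) N
  refine ⟨X, Y, U, V, x, y, d, u, v, e, hdX, hdU, ?_⟩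
  obtain ⟨α, rfl⟩ := hd.exists_lift (w.leDeg_mono h3 hdX.2.1) x
  obtain ⟨β, rfl⟩ := hd'.exists_desc (w.geDeg_anti (by omega) hdU.2.2) v
  simp only [Category.assoc]
  rw [reassoc_of% hz, zero_comp, comp_zero]

/-- Theorem 2.1.1(1): if `g` kills weights `m,…,n` and `m ≤ m' ≤ n' ≤ n`, then `g` also kills
weights `m',…,n'`. -/
theorem killsWeights_mono (w : WeightStructure C) (m n m' n' : ℤ)
    (h1 : m ≤ m') (h2 : m' ≤ n') (h3 : n' ≤ n)
    {M N : C} (g : M ⟶ N) (hg : w.KillsWeights m n g) :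
    w.KillsWeights m' n' g :=
  killsWeights_mono_general w m n m' n' h1 h3 g hg
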